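/- Let λ = (λ₁, λ₂, …, λ_N) be a partition with at most N parts, and let λ' be its conjugate. Then the multiset union of A = {λ'_i - i + 1/2 : 1 ≤ i ≤ N, λ'_i - i + 1/2 > 0} and B = {-λ_i + i - 1/2 : 1 ≤ i ≤ N, λ_i - i + 1/2 < 0} is exactly the set {1/2, 3/2, …, N - 1/2}; that is, A and B are disjoint and A ∪ B = {k - 1/2 : 1 ≤ k ≤ N}. -/

import Mathlib

/-!
Write `k - 1/2` for the elements of both sides. An element of the first set comes from some
`i` with `λ'_i + 1 = i + k`, one of the second from some `j` with `λ_j + k = j`. Since `λ` is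
weakly decreasing, `j ≤ λ'_r ↔ r ≤ λ_j`, which rules out `λ'_i + λ_j + 1 = i + j`; so no `k`
arises both ways. Conversely, for `1 ≤ k ≤ N` let `j₀` be the first index with `λ_{j₀} + k ≤ j₀`
(or `N + 1` if there is none): either `λ_{j₀} + k = j₀`, or `i = j₀ - k` has `λ'_i = j₀ - 1`.
-/

/-- The conjugate partition: `conj N lam i = #{j : 1 ≤ j ≤ N, lam j ≥ i}`. -/
def conj (N : ℕ) (lam : ℕ → ℕ) (i : ℕ) : ℕ :=
  ((Finset.Icc 1 N).filter (fun j => i ≤ lam j)).card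

lemma conj_le (N : ℕ) (lam : ℕ → ℕ) (r : ℕ) : conj N lam r ≤ N := by
  simpa [conj] using Finset.card_filter_le (Finset.Icc 1 N) (fun j => r ≤ lam j)

def conjOffsets (N : ℕ) (lam : ℕ → ℕ) : Set ℕ :=
  {k | 1 ≤ k ∧ ∃ i, 1 ≤ i ∧ i ≤ N ∧ conj N lam i + 1 = i + k}

def lamOffsets (N : ℕ) (lam : ℕ → ℕ) : Set ℕ :=
  {k | 1 ≤ k ∧ ∃ j, 1 ≤ j ∧ j ≤ N ∧ lam j + k = j}

section

variable {N : ℕ} {lam : ℕ → ℕ}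

lemma le_conj_iff (hlam : AntitoneOn lam (Set.Icc 1 N)) {j r : ℕ} (hj1 : 1 ≤ j) (hjN : j ≤ N) :
    j ≤ conj N lam r ↔ r ≤ lam j := by
  constructor
  · intro hj
    by_contra! hlt
    have hsub : (Finset.Icc 1 N).filter (fun m => r ≤ lam m) ⊆ Finset.Icc 1 (j - 1) := by
      intro m hm
      simp only [Finset.mem_filter, Finset.mem_Icc] at hm ⊢
      have : m < j := lt_of_not_ge fun hjm => (hm.2.trans (hlam ⟨hj1, hjN⟩ hm.1 hjm)).not_gt hlt
      omega
    have := Finset.card_le_card hsub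
    simp only [conj, Nat.card_Icc] at this hj
    omega
  · intro hr
    have hsub : Finset.Icc 1 j ⊆ (Finset.Icc 1 N).filter (fun m => r ≤ lam m) := by
      intro m hm
      simp only [Finset.mem_filter, Finset.mem_Icc] at hm ⊢
      exact ⟨⟨hm.1, hm.2.trans hjN⟩, hr.trans (hlam ⟨hm.1, hm.2.trans hjN⟩ ⟨hj1, hjN⟩ hm.2)⟩
    simpa [conj] using Finset.card_le_card hsub

lemma conj_add_lam_add_one_ne (hlam : AntitoneOn lam (Set.Icc 1 N)) (i : ℕ) {j : ℕ}
    (hj1 : 1 ≤ j) (hjN : j ≤ N) : conj N lam i + lam j + 1 ≠ i + j := by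
  have := le_conj_iff hlam (r := i) hj1 hjN
  omega

lemma exists_conj_add_one_eq_or_lam_add_eq (hlam : AntitoneOn lam (Set.Icc 1 N)) {k : ℕ}
    (hk1 : 1 ≤ k) (hkN : k ≤ N) :
    (∃ i, 1 ≤ i ∧ i ≤ N ∧ conj N lam i + 1 = i + k) ∨ (∃ j, 1 ≤ j ∧ j ≤ N ∧ lam j + k = j) := by
  have hex : ∃ j, N < j ∨ lam j + k ≤ j := ⟨N + 1, .inl (Nat.lt_succ_self N)⟩
  set j₀ := Nat.find hex
  have hspec : N < j₀ ∨ lam j₀ + k ≤ j₀ := Nat.find_spec hex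
  have hj₀N : j₀ ≤ N + 1 := Nat.find_min' hex (.inl (Nat.lt_succ_self N))
  by_cases hB : j₀ ≤ N ∧ lam j₀ + k = j₀
  · exact .inr ⟨j₀, by omega, hB.1, hB.2⟩
  left
  have hk : k < j₀ := by omega
  have hprev : j₀ - 1 < lam (j₀ - 1) + k := by
    have := Nat.find_min hex (m := j₀ - 1) (by omega)
    omega
  have hlower : j₀ - 1 ≤ conj N lam (j₀ - k) :=
    (le_conj_iff hlam (by omega) (by omega)).2 (by omega)
  have hupper : conj N lam (j₀ - k) < j₀ := by
    rcases Nat.lt_or_ge N j₀ with hN | hN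
    · exact (conj_le N lam _).trans_lt hN
    · exact not_le.1 ((le_conj_iff hlam (by omega) hN).not.2 (by omega))
  exact ⟨j₀ - k, by omega, by omega, by omega⟩

lemma disjoint_conjOffsets_lamOffsets (hlam : AntitoneOn lam (Set.Icc 1 N)) :
    Disjoint (conjOffsets N lam) (lamOffsets N lam) := by
  rintro s hsA hsB k hk
  obtain ⟨-, i, -, -, hi⟩ := hsA hk
  obtain ⟨-, j, hj1, hjN, hj⟩ := hsB hk
  exact conj_add_lam_add_one_ne hlam i hj1 hjN (by omega)

lemma conjOffsets_union_lamOffsets (hlam : AntitoneOn lam (Set.Icc 1 N)) :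
    conjOffsets N lam ∪ lamOffsets N lam = Set.Icc 1 N := by
  ext k
  constructor
  · rintro (⟨hk1, i, hi1, -, hi⟩ | ⟨hk1, j, -, hjN, hj⟩)
    · exact ⟨hk1, by have := conj_le N lam i; omega⟩
    · exact ⟨hk1, by omega⟩
  · rintro ⟨hk1, hkN⟩
    exact (exists_conj_add_one_eq_or_lam_add_eq hlam hk1 hkN).imp (⟨hk1, ·⟩) (⟨hk1, ·⟩)

end

lemma image_conjOffsets (N : ℕ) (lam : ℕ → ℕ) :
    (fun k : ℕ => (k : ℚ) - 1/2) '' conjOffsets N lam =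
      {x : ℚ | ∃ i, 1 ≤ i ∧ i ≤ N ∧ x = (conj N lam i : ℚ) - i + 1/2 ∧ 0 < x} := by
  ext x
  constructor
  · rintro ⟨k, ⟨hk1, i, hi1, hiN, hi⟩, rfl⟩
    have hk : (1 : ℚ) ≤ k := by exact_mod_cast hk1
    have hi : (conj N lam i : ℚ) + 1 = i + k := by exact_mod_cast hi
    exact ⟨i, hi1, hiN, by linarith, by linarith⟩
  · rintro ⟨i, hi1, hiN, rfl, hpos⟩
    have hi : i ≤ conj N lam i := by
      have : (i : ℚ) < conj N lam i + 1 := by linarith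
      exact Nat.lt_succ_iff.1 (by exact_mod_cast this)
    refine ⟨conj N lam i - i + 1, ⟨by omega, i, hi1, hiN, by omega⟩, ?_⟩
    push_cast [Nat.cast_sub hi]
    ring

lemma image_lamOffsets (N : ℕ) (lam : ℕ → ℕ) :
    (fun k : ℕ => (k : ℚ) - 1/2) '' lamOffsets N lam =
      {x : ℚ | ∃ i, 1 ≤ i ∧ i ≤ N ∧ x = -(lam i : ℚ) + i - 1/2 ∧
        (lam i : ℚ) - i + 1/2 < 0} := by
  ext x
  constructor
  · rintro ⟨k, ⟨hk1, j, hj1, hjN, hj⟩, rfl⟩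
    have hk : (1 : ℚ) ≤ k := by exact_mod_cast hk1
    have hj : (lam j : ℚ) + k = j := by exact_mod_cast hj
    exact ⟨j, hj1, hjN, by linarith, by linarith⟩
  · rintro ⟨j, hj1, hjN, rfl, hneg⟩
    have hj : lam j < j := by
      have : (lam j : ℚ) < j := by linarith
      exact_mod_cast this
    refine ⟨j - lam j, ⟨by omega, j, hj1, hjN, by omega⟩, ?_⟩
    push_cast [hj.le]
    ring

theorem stmt1 (N : ℕ) (lam : ℕ → ℕ)
    (hmono : ∀ i j, 1 ≤ i → i ≤ j → j ≤ N → lam j ≤ lam i) :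
    Disjoint
      {x : ℚ | ∃ i, 1 ≤ i ∧ i ≤ N ∧ x = (conj N lam i : ℚ) - i + 1/2 ∧ 0 < x}
      {x : ℚ | ∃ i, 1 ≤ i ∧ i ≤ N ∧ x = -(lam i : ℚ) + i - 1/2 ∧
        (lam i : ℚ) - i + 1/2 < 0} ∧
    {x : ℚ | ∃ i, 1 ≤ i ∧ i ≤ N ∧ x = (conj N lam i : ℚ) - i + 1/2 ∧ 0 < x} ∪
      {x : ℚ | ∃ i, 1 ≤ i ∧ i ≤ N ∧ x = -(lam i : ℚ) + i - 1/2 ∧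
        (lam i : ℚ) - i + 1/2 < 0} =
      {x : ℚ | ∃ k, 1 ≤ k ∧ k ≤ N ∧ x = (k : ℚ) - 1/2} := by
  have hlam : AntitoneOn lam (Set.Icc 1 N) := fun i hi j hj hij => hmono i j hi.1 hij hj.2
  have hinj : Function.Injective (fun k : ℕ => (k : ℚ) - 1/2) := fun a b h => by
    simpa using h
  rw [← image_conjOffsets, ← image_lamOffsets, ← Set.image_union,
    conjOffsets_union_lamOffsets hlam]
  refine ⟨(Set.disjoint_image_iff hinj).2 (disjoint_conjOffsets_lamOffsets hlam), ?_⟩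
  ext x
  simp [eq_comm, and_assoc]
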